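/- arXiv:math/0312489 — 2 statements merged into one kernel-verified Lean document; each statement's English description precedes it below -/
import Mathlib

section
/- Let ℓ ≠ p be primes, R a complete noetherian local ring with residue field F of characteristic ℓ, and ρ : G → GL_n(R) a continuous representation of a profinite group G such that the reduction ρ̄ : G → GL_n(F) satisfies: the image ρ̄(I) of a closed subgroup I ≤ G has order prime to ℓ, and ρ(I) ≅ ρ̄(I) (i.e., ρ restricted to I factors through ρ̄(I)). Then rank_R (R^n)^{ρ(I)} = dim_F (F^n)^{ρ̄(I)}. -/
open Matrix IsLocalRing

set_option maxSynthPendingDepth 2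

/-- The submodule of `Rⁿ` fixed by the matrices `ρ g` for `g` in a subgroup `H`. -/
def fixedSubmoduleOn {R G : Type*} [CommRing R] [Group G] (n : ℕ)
    (ρ : G →* (Matrix (Fin n) (Fin n) R)ˣ) (H : Subgroup G) :
    Submodule R (Fin n → R) :=
  ⨅ g : H, LinearMap.ker
    (Matrix.mulVecLin ((ρ (g : G) : Matrix (Fin n) (Fin n) R)) - LinearMap.id)

open scoped TensorProduct in
lemma aux_rank_range_idem (R : Type*) [CommRing R] [IsLocalRing R] [IsNoetherianRing R]
    (n : ℕ) (E : Matrix (Fin n) (Fin n) R) (hE : E * E = E) :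
    Module.finrank R (LinearMap.range (mulVecLin E))
      = Module.finrank (ResidueField R)
          (LinearMap.range (mulVecLin (E.map (residue R)))) := by
  classical
  set K := ResidueField R
  set e : (Fin n → R) →ₗ[R] (Fin n → R) := mulVecLin E with he
  have hee : e ∘ₗ e = e := LinearMap.ext fun x => by
    show E *ᵥ (E *ᵥ x) = E *ᵥ x
    rw [Matrix.mulVec_mulVec, hE]
  set p : Submodule R (Fin n → R) := LinearMap.range e with hp
  have hproj : LinearMap.IsProj p e := by
    refine ⟨fun x => LinearMap.mem_range_self e x, ?_⟩
    rintro x ⟨y, rfl⟩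
    exact LinearMap.congr_fun hee y
  set π : (Fin n → R) →ₗ[R] p := hproj.codRestrict with hπ
  have hsplit : π ∘ₗ p.subtype = LinearMap.id :=
    LinearMap.ext fun x => hproj.codRestrict_apply_cod x
  have heq : e = p.subtype ∘ₗ π := rfl
  have hfin : Module.Finite R p := Module.Finite.iff_fg.mpr (IsNoetherian.noetherian p)
  have hprojmod : Module.Projective R p := Module.Projective.of_split p.subtype π hsplit
  have hfp : Module.FinitePresentation R p := Module.finitePresentation_of_finite R p
  have hfree : Module.Free R p := Module.free_of_flat_of_isLocalRing
  -- base change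
  set ι1 := (p.subtype).baseChange K with hι1
  set π1 := π.baseChange K with hπ1
  have h1 : π1 ∘ₗ ι1 = LinearMap.id := by
    rw [hι1, hπ1, ← LinearMap.baseChange_comp, hsplit, LinearMap.baseChange_id]
  have h1' : ∀ x, π1 (ι1 x) = x := fun x => LinearMap.congr_fun h1 x
  have hinj : Function.Injective ι1 := Function.LeftInverse.injective h1'
  have hsurj : LinearMap.range π1 = ⊤ :=
    LinearMap.range_eq_top.mpr (fun y => ⟨ι1 y, h1' y⟩)
  have hranges : LinearMap.range (e.baseChange K) = LinearMap.range ι1 := by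
    rw [heq, LinearMap.baseChange_comp, LinearMap.range_comp_of_range_eq_top _ hsurj]
  set ψ := TensorProduct.piScalarRight R K K (Fin n) with hψ
  have hcomm : ψ.toLinearMap ∘ₗ e.baseChange K
      = (mulVecLin (E.map (residue R))) ∘ₗ ψ.toLinearMap := by
    apply LinearMap.restrictScalars_injective R
    apply TensorProduct.ext'
    intro a v
    show ψ (e.baseChange K (a ⊗ₜ v)) = mulVecLin (E.map (residue R)) (ψ (a ⊗ₜ v))
    rw [LinearMap.baseChange_tmul]
    funext j
    have hres : ∀ r : R, (r • a : K) = residue R r * a := fun r => by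
      rw [Algebra.smul_def]
      rfl
    simp only [hψ, TensorProduct.piScalarRight_apply, TensorProduct.piScalarRightHom_tmul,
      mulVecLin_apply, he]
    simp only [hres, Matrix.mulVec, dotProduct, Matrix.map_apply, map_sum, _root_.map_mul,
      Finset.sum_mul, mul_assoc]
  have hK : Submodule.map ψ.toLinearMap (LinearMap.range (e.baseChange K))
      = LinearMap.range (mulVecLin (E.map (residue R))) := by
    rw [← LinearMap.range_comp, hcomm, LinearMap.range_comp_of_range_eq_top _ (LinearEquiv.range ψ)]
  calc Module.finrank R p
      = Module.finrank K (K ⊗[R] p) := (Module.finrank_baseChange (R := K) (M' := p)).symm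
    _ = Module.finrank K (LinearMap.range ι1) :=
        (LinearEquiv.ofInjective ι1 hinj).finrank_eq
    _ = Module.finrank K (LinearMap.range (e.baseChange K)) := by rw [hranges]
    _ = Module.finrank K (Submodule.map ψ.toLinearMap (LinearMap.range (e.baseChange K))) :=
        (LinearEquiv.finrank_map_eq ψ _).symm
    _ = Module.finrank K (LinearMap.range (mulVecLin (E.map (residue R)))) := by rw [hK]

lemma sum_mulVec_helper {R ι : Type*} [CommRing R] [Fintype ι] {n : ℕ}
    (f : ι → Matrix (Fin n) (Fin n) R) (x : Fin n → R) :
    (∑ u, f u) *ᵥ x = ∑ u, f u *ᵥ x := by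
  funext i
  simp only [Matrix.mulVec, dotProduct, Matrix.sum_apply, Finset.sum_apply,
    Finset.sum_mul]
  rw [Finset.sum_comm]


/-- Let `ℓ ≠ p` be primes, `R` a complete noetherian local ring with
residue field `F` of characteristic `ℓ`, and `ρ : G →* GL_n(R)` a representation whose
reduction `ρ̄` has image `ρ̄(I)` of finite order prime to `ℓ` on a subgroup `I ≤ G`,
and such that `ρ` restricted to `I` factors through `ρ̄(I)`.  Then
`rank_R (Rⁿ)^{ρ(I)} = dim_F (Fⁿ)^{ρ̄(I)}`. -/
theorem rank_invariants_eq_of_prime_to_l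
    (ℓ p : ℕ) (hℓ : ℓ.Prime) (hp : p.Prime) (hlp : ℓ ≠ p)
    (R : Type*) [CommRing R] [IsLocalRing R] [IsNoetherianRing R]
    [IsAdicComplete (maximalIdeal R) R] [CharP (ResidueField R) ℓ]
    (G : Type*) [Group G] (n : ℕ)
    (ρ : G →* (Matrix (Fin n) (Fin n) R)ˣ) (I : Subgroup G)
    -- the image of `I` under the reduction `ρ̄` is finite of order prime to `ℓ`
    (hfin : Finite
      (Subgroup.map ((Units.map ((residue R).mapMatrix.toMonoidHom)).comp ρ) I))
    (hord : ¬ ℓ ∣ Nat.card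
      (Subgroup.map ((Units.map ((residue R).mapMatrix.toMonoidHom)).comp ρ) I))
    -- `ρ` restricted to `I` factors through `ρ̄(I)`, i.e. `ρ(I) ≅ ρ̄(I)`
    (hfact : ∀ g ∈ I,
      (Units.map ((residue R).mapMatrix.toMonoidHom)) (ρ g) = 1 → ρ g = 1) :
    Module.finrank R (fixedSubmoduleOn n ρ I)
      = Module.finrank (ResidueField R)
          (fixedSubmoduleOn n ((Units.map ((residue R).mapMatrix.toMonoidHom)).comp ρ) I) := by
  classical
  set K := ResidueField R with hK
  set rm : Matrix (Fin n) (Fin n) R →+* Matrix (Fin n) (Fin n) K := (residue R).mapMatrix with hrm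
  set rU : (Matrix (Fin n) (Fin n) R)ˣ →* (Matrix (Fin n) (Fin n) K)ˣ :=
    Units.map rm.toMonoidHom with hrU
  set Γ : Subgroup (Matrix (Fin n) (Fin n) R)ˣ := Subgroup.map ρ I with hΓ
  set Γ' : Subgroup (Matrix (Fin n) (Fin n) K)ˣ := Subgroup.map (rU.comp ρ) I with hΓ'
  have hmem : ∀ u : Γ, rU ↑u ∈ Γ' := by
    rintro ⟨u, g, hg, rfl⟩
    exact ⟨g, hg, rfl⟩
  set φ : Γ → Γ' := fun u => ⟨rU ↑u, hmem u⟩ with hφ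
  have hφbij : Function.Bijective φ := by
    constructor
    · rintro ⟨u1, g1, hg1, rfl⟩ ⟨u2, g2, hg2, rfl⟩ h
      have h' : rU (ρ g1) = rU (ρ g2) := congrArg Subtype.val h
      have h2 : rU (ρ (g1 * g2⁻¹)) = 1 := by
        rw [_root_.map_mul, _root_.map_mul, _root_.map_inv, _root_.map_inv, h', mul_inv_cancel]
      have h3 : ρ (g1 * g2⁻¹) = 1 := hfact _ (I.mul_mem hg1 (I.inv_mem hg2)) h2
      have h4 : ρ g1 * (ρ g2)⁻¹ = 1 := by rw [← _root_.map_inv, ← _root_.map_mul]; exact h3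
      exact Subtype.ext (by
        have := mul_eq_one_iff_eq_inv.mp h4
        simpa using this)
    · rintro ⟨u, g, hg, rfl⟩
      exact ⟨⟨ρ g, g, hg, rfl⟩, rfl⟩
  have hΓfin : Finite Γ := Finite.of_injective φ hφbij.1
  have hfty : Fintype Γ := Fintype.ofFinite Γ
  set m : ℕ := Nat.card Γ' with hm
  have hcard : Fintype.card Γ = m := by
    rw [← Nat.card_eq_fintype_card, hm]
    exact Nat.card_eq_of_bijective φ hφbij
  have hm0 : m ≠ 0 := Nat.card_ne_zero.mpr ⟨⟨1, Γ'.one_mem⟩, hfin⟩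
  have hmK : ((m : ℕ) : K) ≠ 0 := by
    intro h
    exact hord ((CharP.cast_eq_zero_iff K ℓ m).mp h)
  have hures : residue R ((m : ℕ) : R) = ((m : ℕ) : K) := map_natCast _ m
  have hu : IsUnit ((m : ℕ) : R) := by
    by_contra h
    have : ((m : ℕ) : R) ∈ maximalIdeal R := h
    have : residue R ((m : ℕ) : R) = 0 := Ideal.Quotient.eq_zero_iff_mem.mpr this
    rw [hures] at this
    exact hmK this
  set c : Rˣ := hu.unit with hcu
  have hc : (c : R) = ((m : ℕ) : R) := hu.unit_spec
  set A : Matrix (Fin n) (Fin n) R := ∑ u : Γ, ((u : (Matrix (Fin n) (Fin n) R)ˣ) : Matrix (Fin n) (Fin n) R) with hA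
  set E : Matrix (Fin n) (Fin n) R := ((c⁻¹ : Rˣ) : R) • A with hE
  -- left-invariance
  have L1 : ∀ u : Γ, ((u : (Matrix (Fin n) (Fin n) R)ˣ) : Matrix (Fin n) (Fin n) R) * E = E := by
    intro u
    have hA1 : ((u : (Matrix (Fin n) (Fin n) R)ˣ) : Matrix (Fin n) (Fin n) R) * A = A := by
      set f : Γ → Matrix (Fin n) (Fin n) R := fun v => ((v : (Matrix (Fin n) (Fin n) R)ˣ) : Matrix (Fin n) (Fin n) R) with hf
      have key : ∀ v : Γ, ((u : (Matrix (Fin n) (Fin n) R)ˣ) : Matrix (Fin n) (Fin n) R) * f v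
          = f ((Equiv.mulLeft u) v) := fun v => by simp [hf]
      rw [hA, Finset.mul_sum]
      calc ∑ v : Γ, ((u : (Matrix (Fin n) (Fin n) R)ˣ) : Matrix (Fin n) (Fin n) R) * f v
          = ∑ v : Γ, f ((Equiv.mulLeft u) v) := Finset.sum_congr rfl (fun v _ => key v)
        _ = ∑ v : Γ, f v := Equiv.sum_comp (Equiv.mulLeft u) f
    rw [hE, mul_smul_comm, hA1]
  have L2 : E * E = E := by
    have hAE : A * E = ((m : ℕ) : R) • E := by
      rw [hA, Finset.sum_mul]
      have : ∀ u : Γ, ((u : (Matrix (Fin n) (Fin n) R)ˣ) : Matrix (Fin n) (Fin n) R) * E = E := L1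
      rw [Finset.sum_congr rfl (fun u _ => this u), Finset.sum_const, Finset.card_univ, hcard,
        ← Nat.cast_smul_eq_nsmul R m E]
    rw [hE, smul_mul_assoc, hAE, smul_smul, ← hc, Units.inv_mul, one_smul]
    -- membership criteria
  have hmemp : ∀ x : Fin n → R, x ∈ fixedSubmoduleOn n ρ I ↔
      ∀ g : I, ((ρ (g : G) : (Matrix (Fin n) (Fin n) R)ˣ) : Matrix (Fin n) (Fin n) R) *ᵥ x = x := by
    intro x
    simp [fixedSubmoduleOn, Submodule.mem_iInf, LinearMap.mem_ker, LinearMap.sub_apply,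
      sub_eq_zero]
  have hmemp' : ∀ x : Fin n → K, x ∈ fixedSubmoduleOn n (rU.comp ρ) I ↔
      ∀ g : I, (((rU.comp ρ) (g : G) : (Matrix (Fin n) (Fin n) K)ˣ) : Matrix (Fin n) (Fin n) K) *ᵥ x = x := by
    intro x
    simp [fixedSubmoduleOn, Submodule.mem_iInf, LinearMap.mem_ker, LinearMap.sub_apply,
      sub_eq_zero]
  have hprojR : LinearMap.IsProj (fixedSubmoduleOn n ρ I) (mulVecLin E) := by
    constructor
    · intro x
      rw [hmemp]
      intro g
      rw [mulVecLin_apply, Matrix.mulVec_mulVec, L1 ⟨ρ g, g, g.2, rfl⟩]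
    · intro x hx
      rw [hmemp] at hx
      have hAx : A *ᵥ x = ((m : ℕ) : R) • x := by
        rw [hA, sum_mulVec_helper]
        have : ∀ u : Γ, ((u : (Matrix (Fin n) (Fin n) R)ˣ) : Matrix (Fin n) (Fin n) R) *ᵥ x = x := by
          rintro ⟨u, g, hg, rfl⟩
          exact hx ⟨g, hg⟩
        rw [Finset.sum_congr rfl (fun u _ => this u), Finset.sum_const, Finset.card_univ, hcard,
          ← Nat.cast_smul_eq_nsmul R m x]
      rw [mulVecLin_apply, hE, Matrix.smul_mulVec, hAx, smul_smul, ← hc, Units.inv_mul,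
        one_smul]
  set E' : Matrix (Fin n) (Fin n) K := E.map (residue R) with hE'
  have hrmE : rm E = E' := rfl
  have L1' : ∀ u : Γ, rm ((u : (Matrix (Fin n) (Fin n) R)ˣ) : Matrix (Fin n) (Fin n) R) * E' = E' := by
    intro u
    rw [← hrmE, ← _root_.map_mul, L1 u]
  have L2' : E' * E' = E' := by
    rw [← hrmE, ← _root_.map_mul, L2]
  have hE'sum : E' = residue R ((c⁻¹ : Rˣ) : R) •
      ∑ u : Γ, rm ((u : (Matrix (Fin n) (Fin n) R)ˣ) : Matrix (Fin n) (Fin n) R) := by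
    ext i j
    simp [hE', hE, hA, hrm, RingHom.mapMatrix_apply, Matrix.map_apply, Matrix.smul_apply,
      Matrix.sum_apply, map_sum, _root_.map_mul]
  have hprojK : LinearMap.IsProj (fixedSubmoduleOn n (rU.comp ρ) I) (mulVecLin E') := by
    constructor
    · intro x
      rw [hmemp']
      intro g
      have hcoe : (((rU.comp ρ) (g : G) : (Matrix (Fin n) (Fin n) K)ˣ) : Matrix (Fin n) (Fin n) K)
          = rm ((ρ (g : G) : (Matrix (Fin n) (Fin n) R)ˣ) : Matrix (Fin n) (Fin n) R) := rfl
      rw [mulVecLin_apply, Matrix.mulVec_mulVec, hcoe, L1' ⟨ρ g, g, g.2, rfl⟩]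
    · intro x hx
      rw [hmemp'] at hx
      have hAx : (∑ u : Γ, rm ((u : (Matrix (Fin n) (Fin n) R)ˣ) : Matrix (Fin n) (Fin n) R)) *ᵥ x
          = ((m : ℕ) : K) • x := by
        rw [sum_mulVec_helper]
        have : ∀ u : Γ, rm ((u : (Matrix (Fin n) (Fin n) R)ˣ) : Matrix (Fin n) (Fin n) R) *ᵥ x = x := by
          rintro ⟨u, g, hg, rfl⟩
          exact hx ⟨g, hg⟩
        rw [Finset.sum_congr rfl (fun u _ => this u), Finset.sum_const, Finset.card_univ, hcard,
          ← Nat.cast_smul_eq_nsmul K m x]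
      have hcinv : residue R ((c⁻¹ : Rˣ) : R) * ((m : ℕ) : K) = 1 := by
        rw [← hures, ← hc, ← _root_.map_mul, Units.inv_mul, _root_.map_one]
      rw [mulVecLin_apply, hE'sum, Matrix.smul_mulVec, hAx, smul_smul, hcinv, one_smul]
  have hrangeR : LinearMap.range (mulVecLin E) = fixedSubmoduleOn n ρ I := by
    apply le_antisymm
    · rintro x ⟨y, rfl⟩
      exact hprojR.map_mem y
    · intro x hx
      exact ⟨x, hprojR.map_id x hx⟩
  have hrangeK : LinearMap.range (mulVecLin E') = fixedSubmoduleOn n (rU.comp ρ) I := by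
    apply le_antisymm
    · rintro x ⟨y, rfl⟩
      exact hprojK.map_mem y
    · intro x hx
      exact ⟨x, hprojK.map_id x hx⟩
  rw [← hrangeR, ← hrangeK, hE']
  exact aux_rank_range_idem R n E L2
end

section
/- Let q ≥ 2 be an integer and let Ḡ_q = Ẑ' ⋊ Ẑ be the profinite group topologically generated by elements s, t with t generating Ẑ' (the prime-to-p completion of Ẑ), s generating Ẑ, and relation s t s^{-1} = t^q. Let ℓ be a prime not dividing q and F a finite field of characteristic ℓ with trivial Ḡ_q-action. A normalized continuous 2-cocycle [·,·] : Ḡ_q × Ḡ_q → F (restricted to the subgroup generated by t and s^{ℓ-1}) is a coboundary if and only if d([·,·]) := Σ_{i=1}^{q^{ℓ-1}−1} [t^i, t] + [t^{q^{ℓ-1}}, s^{ℓ-1}] − [s^{ℓ-1}, t] equals 0 in F. -/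
/-- The tame relation subgroup `⟨s^(ℓ-1), t⟩` modelled as the presented group
`⟨σ, τ ∣ σ τ σ⁻¹ = τ^m⟩` with `m = q^(ℓ-1)` (generator `0` is `σ = s^(ℓ-1)`,
generator `1` is `τ = t`). -/
def TameGroup (m : ℕ) : Type :=
  PresentedGroup ({FreeGroup.of 0 * FreeGroup.of 1 * (FreeGroup.of 0)⁻¹ *
    ((FreeGroup.of 1) ^ m)⁻¹} : Set (FreeGroup (Fin 2)))

instance (m : ℕ) : Group (TameGroup m) := by unfold TameGroup; infer_instance

/-- The generator `σ` (corresponding to `s^(ℓ-1)`). -/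
def TameGroup.sigma (m : ℕ) : TameGroup m := PresentedGroup.of 0
/-- The generator `τ` (corresponding to `t`). -/
def TameGroup.tau (m : ℕ) : TameGroup m := PresentedGroup.of 1

/-!
A normalized 2-cocycle `c` on `G` defines a central extension `E = F ×_c G`, and `c` is a coboundary
as soon as `E → G` has a homomorphic section. On `⟨σ, τ ∣ σ τ σ⁻¹ = τ^m⟩` a section exists once the
lifts `(0, σ)`, `(0, τ)` satisfy the relation, and they do exactly when `d(c) = 0`. Conversely, for
`c = δf` one computes `d(c) = (m - 1) f(τ)`, which vanishes in characteristic `ℓ` since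
`m = q^(ℓ-1) ≡ 1 [MOD ℓ]`.
-/

open Finset

section Cocycle

variable (G F : Type*) [Group G] [AddCommGroup F]

structure NormalizedTwoCocycle where
  toFun : G → G → F
  map_one_left : ∀ g, toFun 1 g = 0
  cocycle : ∀ f g h, toFun (f * g) h + toFun f g = toFun f (g * h) + toFun g h

variable {G F}

instance : CoeFun (NormalizedTwoCocycle G F) fun _ => G → G → F := ⟨NormalizedTwoCocycle.toFun⟩

@[ext]
structure CocycleExt (c : NormalizedTwoCocycle G F) where
  fst : F
  snd : G

namespace CocycleExt

variable {c : NormalizedTwoCocycle G F}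

instance : Mul (CocycleExt c) := ⟨fun p q => ⟨p.fst + q.fst + c p.snd q.snd, p.snd * q.snd⟩⟩

instance : One (CocycleExt c) := ⟨⟨0, 1⟩⟩

instance : Inv (CocycleExt c) := ⟨fun p => ⟨-p.fst - c p.snd⁻¹ p.snd, p.snd⁻¹⟩⟩

@[simp] theorem mul_fst (p q : CocycleExt c) : (p * q).fst = p.fst + q.fst + c p.snd q.snd := rfl

@[simp] theorem mul_snd (p q : CocycleExt c) : (p * q).snd = p.snd * q.snd := rfl

@[simp] theorem one_fst : (1 : CocycleExt c).fst = 0 := rfl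

@[simp] theorem one_snd : (1 : CocycleExt c).snd = 1 := rfl

instance : Group (CocycleExt c) :=
  Group.ofLeftAxioms
    (fun p q r => by
      ext
      · have := c.cocycle p.snd q.snd r.snd
        simp only [mul_fst, mul_snd]
        linear_combination (norm := abel) this
      · exact mul_assoc _ _ _)
    (fun p => by ext <;> simp [c.map_one_left])
    (fun p => by
      ext
      · show -p.fst - c p.snd⁻¹ p.snd + p.fst + c p.snd⁻¹ p.snd = 0
        abel
      · exact inv_mul_cancel p.snd)

def sndHom (c : NormalizedTwoCocycle G F) : CocycleExt c →* G where
  toFun := snd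
  map_one' := rfl
  map_mul' _ _ := rfl

@[simp] theorem sndHom_apply (p : CocycleExt c) : sndHom c p = p.snd := rfl

theorem mk_zero_pow (t : G) :
    ∀ n : ℕ, (⟨0, t⟩ : CocycleExt c) ^ n = ⟨∑ i ∈ Icc 1 (n - 1), c (t ^ i) t, t ^ n⟩
  | 0 => by ext <;> simp
  | 1 => by ext <;> simp
  | n + 2 => by
    rw [pow_succ, mk_zero_pow t (n + 1)]
    ext
    · simp [sum_Icc_succ_top]
    · simp [pow_succ]

theorem exists_coboundary_of_section (φ : G →* CocycleExt c) (hφ : ∀ g, (φ g).snd = g) :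
    ∃ f : G → F, f 1 = 0 ∧ ∀ g h, c g h = f g + f h - f (g * h) := by
  refine ⟨fun g => -(φ g).fst, by simp [map_one], fun g h => ?_⟩
  have hfst := congrArg fst (map_mul φ g h)
  simp only [mul_fst, hφ] at hfst
  show c g h = -(φ g).fst + -(φ h).fst - -(φ (g * h)).fst
  rw [hfst]
  abel

end CocycleExt

end Cocycle

section Defect

variable {G F : Type*} [Group G] [AddCommGroup F]

/-- `c s t` and `∑ i ∈ Icc 1 (m - 1), c (t ^ i) t + c (t ^ m) s` are the `F`-components of
`(0, s) (0, t)` and `(0, t) ^ m (0, s)` in the extension defined by `c`. -/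
def relationDefect (c : G → G → F) (m : ℕ) (s t : G) : F :=
  (∑ i ∈ Icc 1 (m - 1), c (t ^ i) t) + c (t ^ m) s - c s t

theorem sum_Icc_coboundary_pow {c : G → G → F} {f : G → F} (hf1 : f 1 = 0)
    (hc : ∀ g h, c g h = f g + f h - f (g * h)) (t : G) :
    ∀ n : ℕ, ∑ i ∈ Icc 1 (n - 1), c (t ^ i) t = n • f t - f (t ^ n)
  | 0 => by simp [hf1]
  | 1 => by simp
  | n + 2 => by
    have ih := sum_Icc_coboundary_pow hf1 hc t (n + 1)
    rw [Nat.add_sub_cancel] at ih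
    rw [show n + 2 - 1 = n + 1 by omega, sum_Icc_succ_top (by omega), ih, hc, ← pow_succ]
    simp only [succ_nsmul]
    abel

theorem relationDefect_of_coboundary {c : G → G → F} {f : G → F} (hf1 : f 1 = 0)
    (hc : ∀ g h, c g h = f g + f h - f (g * h)) {m : ℕ} {s t : G} (hst : s * t = t ^ m * s) :
    relationDefect c m s t = m • f t - f t := by
  rw [relationDefect, sum_Icc_coboundary_pow hf1 hc, hc, hc, hst]
  abel

theorem CocycleExt.mk_zero_mul_mk_zero {c : NormalizedTwoCocycle G F} {m : ℕ} {s t : G}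
    (hst : s * t = t ^ m * s) (hd : relationDefect c m s t = 0) :
    (⟨0, s⟩ : CocycleExt c) * ⟨0, t⟩ = ⟨0, t⟩ ^ m * ⟨0, s⟩ := by
  rw [mk_zero_pow]
  ext
  · rw [relationDefect, sub_eq_zero] at hd
    simpa using hd.symm
  · exact hst

end Defect

namespace TameGroup

variable {m : ℕ} {H : Type*} [Group H]

theorem sigma_mul_tau (m : ℕ) : sigma m * tau m = tau m ^ m * sigma m := by
  have h : sigma m * tau m * (sigma m)⁻¹ * (tau m ^ m)⁻¹ = 1 :=
    PresentedGroup.one_of_mem (Set.mem_singleton _)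
  rw [mul_inv_eq_one, mul_inv_eq_iff_eq_mul] at h
  exact h

def lift {a b : H} (hab : a * b = b ^ m * a) : TameGroup m →* H :=
  PresentedGroup.toGroup (f := ![a, b]) (by
    rintro r rfl
    simp [hab])

@[simp] theorem lift_sigma {a b : H} (hab : a * b = b ^ m * a) : lift hab (sigma m) = a :=
  PresentedGroup.toGroup.of _

@[simp] theorem lift_tau {a b : H} (hab : a * b = b ^ m * a) : lift hab (tau m) = b :=
  PresentedGroup.toGroup.of _

theorem hom_ext {φ ψ : TameGroup m →* H} (hσ : φ (sigma m) = ψ (sigma m))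
    (hτ : φ (tau m) = ψ (tau m)) : φ = ψ :=
  PresentedGroup.ext fun i => by fin_cases i <;> assumption

end TameGroup

theorem NormalizedTwoCocycle.exists_coboundary_of_relationDefect_eq_zero {F : Type*}
    [AddCommGroup F] {m : ℕ} (c : NormalizedTwoCocycle (TameGroup m) F)
    (hd : relationDefect c m (TameGroup.sigma m) (TameGroup.tau m) = 0) :
    ∃ f : TameGroup m → F, f 1 = 0 ∧ ∀ g h, c g h = f g + f h - f (g * h) := by
  let φ := TameGroup.lift (CocycleExt.mk_zero_mul_mk_zero (TameGroup.sigma_mul_tau m) hd)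
  have hsection : (CocycleExt.sndHom c).comp φ = MonoidHom.id _ :=
    TameGroup.hom_ext (by simp [φ]) (by simp [φ])
  exact CocycleExt.exists_coboundary_of_section φ fun g => DFunLike.congr_fun hsection g

theorem natCast_pow_pred_eq_one (R : Type*) [AddMonoidWithOne R] {ℓ : ℕ} [CharP R ℓ]
    (hℓ : ℓ.Prime) {q : ℕ} (hq : ¬ ℓ ∣ q) : ((q ^ (ℓ - 1) : ℕ) : R) = 1 := by
  have hcop : q.Coprime ℓ := Nat.coprime_comm.mp ((Nat.Prime.coprime_iff_not_dvd hℓ).mpr hq)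
  exact_mod_cast CharP.natCast_eq_natCast' R ℓ (Nat.ModEq.pow_card_sub_one_eq_one hℓ hcop)

theorem normalized_two_cocycle_coboundary_iff_general
    (ℓ q : ℕ) (hℓ : ℓ.Prime) (hq : ¬ ℓ ∣ q)
    (F : Type*) [Field F] (hchar : CharP F ℓ)
    (c : TameGroup (q ^ (ℓ - 1)) → TameGroup (q ^ (ℓ - 1)) → F)
    (hnorm : ∀ g : TameGroup (q ^ (ℓ - 1)), c 1 g = 0 ∧ c g 1 = 0)
    (hcocycle : ∀ f g h : TameGroup (q ^ (ℓ - 1)),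
      c g h - c (f * g) h + c f (g * h) - c f g = 0) :
    (∃ f : TameGroup (q ^ (ℓ - 1)) → F, f 1 = 0 ∧
        ∀ g h : TameGroup (q ^ (ℓ - 1)), c g h = f g + f h - f (g * h))
    ↔ (∑ i ∈ Finset.Icc 1 (q ^ (ℓ - 1) - 1),
          c (TameGroup.tau (q ^ (ℓ - 1)) ^ i) (TameGroup.tau (q ^ (ℓ - 1))))
        + c (TameGroup.tau (q ^ (ℓ - 1)) ^ (q ^ (ℓ - 1))) (TameGroup.sigma (q ^ (ℓ - 1)))
        - c (TameGroup.sigma (q ^ (ℓ - 1))) (TameGroup.tau (q ^ (ℓ - 1))) = 0 := by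
  let c' : NormalizedTwoCocycle (TameGroup (q ^ (ℓ - 1))) F :=
    ⟨c, fun g => (hnorm g).1, fun f g h => by linear_combination -hcocycle f g h⟩
  change _ ↔ relationDefect c' _ _ _ = 0
  constructor
  · rintro ⟨f, hf1, hf⟩
    rw [relationDefect_of_coboundary hf1 hf (TameGroup.sigma_mul_tau _), nsmul_eq_mul,
      natCast_pow_pred_eq_one F hℓ hq, one_mul, sub_self]
  · exact c'.exists_coboundary_of_relationDefect_eq_zero

/-- Let `q ≥ 2`, `ℓ` a prime not dividing `q`, `F` a finite field of
characteristic `ℓ` with trivial action.  A normalized 2-cocycle `c` on the group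
generated by `t` and `s^(ℓ-1)` (with relation `σ τ σ⁻¹ = τ^(q^(ℓ-1))`) is a
coboundary if and only if
`d(c) = Σ_{i=1}^{q^(ℓ-1)−1} c(τ^i, τ) + c(τ^(q^(ℓ-1)), σ) − c(σ, τ) = 0`. -/
theorem normalized_two_cocycle_coboundary_iff
    (ℓ q : ℕ) (hℓ : ℓ.Prime) (hq2 : 2 ≤ q) (hq : ¬ ℓ ∣ q)
    (F : Type*) [Field F] [Fintype F] (hchar : CharP F ℓ)
    (c : TameGroup (q ^ (ℓ - 1)) → TameGroup (q ^ (ℓ - 1)) → F)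
    (hnorm : ∀ g : TameGroup (q ^ (ℓ - 1)), c 1 g = 0 ∧ c g 1 = 0)
    (hcocycle : ∀ f g h : TameGroup (q ^ (ℓ - 1)),
      c g h - c (f * g) h + c f (g * h) - c f g = 0) :
    (∃ f : TameGroup (q ^ (ℓ - 1)) → F, f 1 = 0 ∧
        ∀ g h : TameGroup (q ^ (ℓ - 1)), c g h = f g + f h - f (g * h))
    ↔ (∑ i ∈ Finset.Icc 1 (q ^ (ℓ - 1) - 1),
          c (TameGroup.tau (q ^ (ℓ - 1)) ^ i) (TameGroup.tau (q ^ (ℓ - 1))))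
        + c (TameGroup.tau (q ^ (ℓ - 1)) ^ (q ^ (ℓ - 1))) (TameGroup.sigma (q ^ (ℓ - 1)))
        - c (TameGroup.sigma (q ^ (ℓ - 1))) (TameGroup.tau (q ^ (ℓ - 1))) = 0 :=
  normalized_two_cocycle_coboundary_iff_general ℓ q hℓ hq F hchar c hnorm hcocycle
end
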